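/- Let g ≥ 1, let c₁, …, c_g be distinct reals, and let p = (p₀,…,p_g), q = (q₀,…,q_g) ∈ ℝ^{g+1} with p_g ≠ 0. Let B = B(p,q) be the symmetric (g+1)×(g+1) real matrix with entries (indices i, j from 0 to g): B_{ij} = q_i p_j for i ≤ j and B_{ij} = p_i q_j for i > j, plus the diagonal matrix diag(c₁, …, c_g, 0). For real z such that B − z·I is invertible, z ∉ {c₁,…,c_g}, and R_{0g}(z) := ⟨(B−z)^{-1}δ_g, p⟩ ≠ 0 (δ_g the last standard basis vector of ℝ^{g+1}), set R_{00}(z) = ⟨(B−z)^{-1}p, p⟩ and R_{gg}(z) = ⟨(B−z)^{-1}δ_g, δ_g⟩. Then the matrix (1/R_{0g}(z)) · [[R_{00}(z)R_{gg}(z) − R_{0g}(z)², −R_{00}(z)],[R_{gg}(z), −1]] equals the transfer matrix 𝔄(z) = a(z,c₁;p₀,q₀)·a(z,c₂;p₁,q₁)⋯a(z,c_g;p_{g−1},q_{g−1})·a(z;p_g,q_g). -/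

import Mathlib

open Matrix

/-- The matrix `𝔧 = [[0,−1],[1,0]]`. -/
def jmat : Matrix (Fin 2) (Fin 2) ℝ := !![0, -1; 1, 0]

/-- The Blaschke–Potapov factor
`a(z,c;p,q) = I − (c−z)⁻¹ · (p,q)ᵀ(p,q) · 𝔧`, defined for `z ≠ c`. -/
noncomputable def bpa (z c p q : ℝ) : Matrix (Fin 2) (Fin 2) ℝ :=
  1 - (c - z)⁻¹ •
    ((!![p; q] : Matrix (Fin 2) (Fin 1) ℝ) * (!![p, q] : Matrix (Fin 1) (Fin 2) ℝ) * jmat)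

/-- The Blaschke–Potapov factor at infinity
`a(z;p,q) = [[0, −p],[1/p, (z−pq)/p]]`, defined for `p ≠ 0`. -/
noncomputable def bpinf (z p q : ℝ) : Matrix (Fin 2) (Fin 2) ℝ :=
  !![0, -p; 1 / p, (z - p * q) / p]

/-- Ordered (noncommutative) product `F s * F (s+1) * ⋯ * F (s+n−1)`;
for `n = 0` this is the identity matrix. -/
noncomputable def prodBP (F : ℕ → Matrix (Fin 2) (Fin 2) ℝ) (s n : ℕ) :
    Matrix (Fin 2) (Fin 2) ℝ :=
  ((List.range n).map fun i => F (s + i)).prod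

/-- The transfer matrix
`𝔄(z) = a(z,c₁;p₀,q₀) ⋯ a(z,c_g;p_{g−1},q_{g−1}) · a(z;p_g,q_g)`. -/
noncomputable def transferM (g : ℕ) (c p q : ℕ → ℝ) (z : ℝ) : Matrix (Fin 2) (Fin 2) ℝ :=
  prodBP (fun j => bpa z (c (j + 1)) (p j) (q j)) 0 g * bpinf z (p g) (q g)

/-- The GSMP block `B(p,q)`: the symmetric `(g+1)×(g+1)` real matrix with entries
`B_{ij} = q_i p_j` for `i ≤ j`, `B_{ij} = p_i q_j` for `i > j`,
plus the diagonal matrix `diag(c₁,…,c_g,0)`. -/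
noncomputable def BmatG (g : ℕ) (c p q : ℕ → ℝ) : Matrix (Fin (g + 1)) (Fin (g + 1)) ℝ :=
  Matrix.of fun i j =>
    (if (i : ℕ) ≤ (j : ℕ) then q i * p j else p i * q j) +
      (if i = j ∧ (i : ℕ) < g then c ((i : ℕ) + 1) else 0)

lemma prodBP_succ (F : ℕ → Matrix (Fin 2) (Fin 2) ℝ) (n : ℕ) :
    prodBP F 0 (n+1) = prodBP F 0 n * F n := by
  simp [prodBP, List.range_succ]

lemma prodBP_zero (F : ℕ → Matrix (Fin 2) (Fin 2) ℝ) :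
    prodBP F 0 0 = 1 := by
  simp [prodBP]

lemma bpa_step (z cc pp qq f h uu : ℝ) (hzc : cc - z ≠ 0)
    (heq : qq * f + pp * h + (cc - z) * uu = 0) :
    bpa z cc pp qq *ᵥ ![f - pp * uu, -(h + qq * uu)] = ![f, -h] := by
  have huu : uu = -((qq * f + pp * h) / (cc - z)) := by
    field_simp
    linarith
  subst huu
  funext i
  fin_cases i <;>
  · simp [bpa, jmat, Matrix.mulVec, dotProduct, Fin.sum_univ_two, Matrix.sub_apply,
      Matrix.one_apply, Matrix.smul_apply, Matrix.mul_apply, Fin.sum_univ_one]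
    field_simp
    ring

lemma prod_vec (g : ℕ) (c p q : ℕ → ℝ) (z : ℝ) (F H U : ℕ → ℝ)
    (hzc : ∀ i, i < g → c (i+1) - z ≠ 0)
    (hF : ∀ i, i < g → F i = F (i+1) + p i * U i)
    (hH : ∀ i, i < g → H (i+1) = H i + q i * U i)
    (heq : ∀ i, i < g → q i * F i + p i * H i + (c (i+1) - z) * U i = 0) :
    ∀ n, n ≤ g →
      prodBP (fun j => bpa z (c (j+1)) (p j) (q j)) 0 n *ᵥ ![F n, -H n] = ![F 0, -H 0] := by
  intro n
  induction n with
  | zero => intro _; rw [prodBP_zero, Matrix.one_mulVec]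
  | succ n ih =>
    intro hn
    have hn' : n < g := hn
    rw [prodBP_succ, ← Matrix.mulVec_mulVec]
    have h1 : (![F (n+1), -H (n+1)] : Fin 2 → ℝ)
        = ![F n - p n * U n, -(H n + q n * U n)] := by
      rw [hF n hn', hH n hn']
      congr 1
      ring
    rw [h1, bpa_step z (c (n+1)) (p n) (q n) (F n) (H n) (U n) (hzc n hn') (heq n hn')]
    exact ih (le_of_lt hn')

/-- partial sums -/
noncomputable def Fsum (g : ℕ) (p : ℕ → ℝ) (u : Fin (g+1) → ℝ) (k : ℕ) : ℝ :=
  ∑ j : Fin (g+1), if k ≤ (j : ℕ) then p (j : ℕ) * u j else 0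

noncomputable def Hsum (g : ℕ) (q : ℕ → ℝ) (u : Fin (g+1) → ℝ) (k : ℕ) : ℝ :=
  ∑ j : Fin (g+1), if (j : ℕ) < k then q (j : ℕ) * u j else 0

lemma Fsum_zero (g : ℕ) (p : ℕ → ℝ) (u : Fin (g+1) → ℝ) :
    Fsum g p u 0 = ∑ j : Fin (g+1), p (j : ℕ) * u j := by
  simp [Fsum]

lemma Hsum_zero (g : ℕ) (q : ℕ → ℝ) (u : Fin (g+1) → ℝ) :
    Hsum g q u 0 = 0 := by
  simp [Hsum]

lemma Fsum_last (g : ℕ) (p : ℕ → ℝ) (u : Fin (g+1) → ℝ) :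
    Fsum g p u g = p g * u (Fin.last g) := by
  unfold Fsum
  have h : ∀ j : Fin (g+1),
      (if g ≤ (j : ℕ) then p (j : ℕ) * u j else 0)
        = if j = Fin.last g then p g * u (Fin.last g) else 0 := by
    intro j
    by_cases hj : j = Fin.last g
    · subst hj; simp [Fin.last]
    · have h1 : (j : ℕ) < g := by
        have := j.isLt
        have : (j : ℕ) ≤ g := Nat.lt_succ_iff.mp j.isLt
        rcases lt_or_eq_of_le this with h | h
        · exact h
        · exact absurd (Fin.ext (by simp [Fin.last, h])) hj
      simp [hj, Nat.not_le.mpr h1]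
  rw [Finset.sum_congr rfl fun j _ => h j]
  simp

lemma Fsum_rec (g : ℕ) (p : ℕ → ℝ) (u : Fin (g+1) → ℝ) (k : ℕ) (hk : k < g + 1) :
    Fsum g p u k = Fsum g p u (k+1) + p k * u ⟨k, hk⟩ := by
  unfold Fsum
  have h : ∀ j : Fin (g+1),
      (if k ≤ (j : ℕ) then p (j : ℕ) * u j else 0)
      = (if k+1 ≤ (j : ℕ) then p (j : ℕ) * u j else 0)
        + (if j = ⟨k, hk⟩ then p k * u ⟨k, hk⟩ else 0) := by
    intro j
    by_cases hj : j = (⟨k, hk⟩ : Fin (g+1))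
    · subst hj; simp
    · have h2 : (j : ℕ) ≠ k := fun h => hj (Fin.ext h)
      by_cases h3 : k ≤ (j : ℕ)
      · have : k + 1 ≤ (j : ℕ) := by omega
        simp [h3, this, hj]
      · have : ¬ (k + 1 ≤ (j : ℕ)) := by omega
        simp [h3, this, hj]
  rw [Finset.sum_congr rfl fun j _ => h j, Finset.sum_add_distrib]
  simp

lemma Hsum_rec (g : ℕ) (q : ℕ → ℝ) (u : Fin (g+1) → ℝ) (k : ℕ) (hk : k < g + 1) :
    Hsum g q u (k+1) = Hsum g q u k + q k * u ⟨k, hk⟩ := by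
  unfold Hsum
  have h : ∀ j : Fin (g+1),
      (if (j : ℕ) < k + 1 then q (j : ℕ) * u j else 0)
      = (if (j : ℕ) < k then q (j : ℕ) * u j else 0)
        + (if j = ⟨k, hk⟩ then q k * u ⟨k, hk⟩ else 0) := by
    intro j
    by_cases hj : j = (⟨k, hk⟩ : Fin (g+1))
    · subst hj; simp
    · have h2 : (j : ℕ) ≠ k := fun h => hj (Fin.ext h)
      by_cases h3 : (j : ℕ) < k
      · have : (j : ℕ) < k + 1 := by omega
        simp [h3, this, hj]
      · have : ¬ ((j : ℕ) < k + 1) := by omega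
        simp [h3, this, hj]
  rw [Finset.sum_congr rfl fun j _ => h j, Finset.sum_add_distrib]
  simp

lemma row_eq (g : ℕ) (c p q : ℕ → ℝ) (z : ℝ) (u : Fin (g+1) → ℝ) (i : Fin (g+1)) :
    ((BmatG g c p q - z • 1) *ᵥ u) i
      = q (i : ℕ) * Fsum g p u (i : ℕ) + p (i : ℕ) * Hsum g q u (i : ℕ)
        + ((if (i : ℕ) < g then c ((i : ℕ)+1) else 0) - z) * u i := by
  have key : ∀ j : Fin (g+1),
      ((BmatG g c p q - z • 1) i j) * u j
      = (if (i : ℕ) ≤ (j : ℕ) then q (i : ℕ) * (p (j : ℕ) * u j) else 0)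
        + (if (j : ℕ) < (i : ℕ) then p (i : ℕ) * (q (j : ℕ) * u j) else 0)
        + (if j = i then ((if (i : ℕ) < g then c ((i : ℕ)+1) else 0) - z) * u j else 0) := by
    intro j
    simp only [BmatG, Matrix.sub_apply, Matrix.smul_apply, Matrix.one_apply, Matrix.of_apply,
      smul_eq_mul]
    by_cases hij : i = j
    · subst hij
      by_cases hig : (i : ℕ) < g <;> simp [hig] <;> ring
    · have hji : j ≠ i := Ne.symm hij
      have hne : (i : ℕ) ≠ (j : ℕ) := fun h => hij (Fin.ext h)
      by_cases hle : (i : ℕ) ≤ (j : ℕ)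
      · have : ¬ ((j : ℕ) < (i : ℕ)) := by omega
        simp [hle, this, hij, hji]
        ring
      · have : (j : ℕ) < (i : ℕ) := by omega
        simp [hle, this, hij, hji]
        ring
  unfold Matrix.mulVec dotProduct Fsum Hsum
  rw [Finset.sum_congr rfl fun j _ => key j, Finset.sum_add_distrib, Finset.sum_add_distrib]
  rw [Finset.sum_ite_eq' Finset.univ i
    (fun j => ((if (i : ℕ) < g then c ((i : ℕ)+1) else 0) - z) * u j)]
  simp [Finset.mul_sum]

lemma BmatG_symm (g : ℕ) (c p q : ℕ → ℝ) (z : ℝ) :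
    (BmatG g c p q - z • (1 : Matrix (Fin (g+1)) (Fin (g+1)) ℝ))ᵀ
      = BmatG g c p q - z • 1 := by
  ext i j
  simp only [Matrix.transpose_apply, Matrix.sub_apply, Matrix.smul_apply, Matrix.one_apply,
    BmatG, Matrix.of_apply, smul_eq_mul]
  by_cases hij : i = j
  · subst hij; ring
  · have hji : j ≠ i := Ne.symm hij
    have hne : (i : ℕ) ≠ (j : ℕ) := fun h => hij (Fin.ext h)
    by_cases hle : (i : ℕ) ≤ (j : ℕ)
    · have h2 : ¬ ((j : ℕ) ≤ (i : ℕ)) := by omega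
      simp [hle, h2, hij, hji]
      ring
    · have h2 : (j : ℕ) ≤ (i : ℕ) := by omega
      simp [hle, h2, hij, hji]
      ring

/-- The transfer matrix expressed through the resolvent of the block
`B(p,q)`: with `R₀₀(z) = ⟨(B−z)⁻¹p, p⟩`, `R₀g(z) = ⟨(B−z)⁻¹δ_g, p⟩`,
`R_gg(z) = ⟨(B−z)⁻¹δ_g, δ_g⟩`, one has
`(1/R₀g)·[[R₀₀R_gg − R₀g², −R₀₀],[R_gg, −1]] = 𝔄(z)`. -/
theorem statement5 (g : ℕ) (hg : 1 ≤ g) (c p q : ℕ → ℝ)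
    (hc : ∀ i j, 1 ≤ i → i ≤ g → 1 ≤ j → j ≤ g → c i = c j → i = j)
    (hpg : p g ≠ 0) (z : ℝ)
    (hz : ∀ j, 1 ≤ j → j ≤ g → z ≠ c j)
    (hinv : IsUnit (BmatG g c p q - z • (1 : Matrix (Fin (g + 1)) (Fin (g + 1)) ℝ)))
    (R00 R0g Rgg : ℝ)
    (hR00 : R00 = (fun i : Fin (g + 1) => p (i : ℕ)) ⬝ᵥ
      ((BmatG g c p q - z • 1)⁻¹ *ᵥ fun i : Fin (g + 1) => p (i : ℕ)))
    (hR0g : R0g = (fun i : Fin (g + 1) => p (i : ℕ)) ⬝ᵥ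
      ((BmatG g c p q - z • 1)⁻¹ *ᵥ Pi.single (Fin.last g) (1 : ℝ)))
    (hRgg : Rgg = Pi.single (Fin.last g) (1 : ℝ) ⬝ᵥ
      ((BmatG g c p q - z • 1)⁻¹ *ᵥ Pi.single (Fin.last g) (1 : ℝ)))
    (hR0g0 : R0g ≠ 0) :
    (1 / R0g) • (!![R00 * Rgg - R0g ^ 2, -R00; Rgg, -1] : Matrix (Fin 2) (Fin 2) ℝ) =
      transferM g c p q z := by
  set M : Matrix (Fin (g+1)) (Fin (g+1)) ℝ := BmatG g c p q - z • 1 with hM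
  have hdet : IsUnit M.det := (Matrix.isUnit_iff_isUnit_det M).mp hinv
  have hMul : M * M⁻¹ = 1 := Matrix.mul_nonsing_inv M hdet
  have hsymmInv : (M⁻¹)ᵀ = M⁻¹ := by
    rw [Matrix.transpose_nonsing_inv, hM, BmatG_symm]
  have hsym : ∀ i j, M⁻¹ i j = M⁻¹ j i := by
    intro i j
    conv_lhs => rw [← hsymmInv]
    rfl
  set δ : Fin (g+1) → ℝ := Pi.single (Fin.last g) 1 with hδ
  set pv : Fin (g+1) → ℝ := fun i => p (i : ℕ) with hpv
  set u1 : Fin (g+1) → ℝ := M⁻¹ *ᵥ δ with hu1def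
  set u2 : Fin (g+1) → ℝ := M⁻¹ *ᵥ pv with hu2def
  have hu1 : M *ᵥ u1 = δ := by
    rw [hu1def, Matrix.mulVec_mulVec, hMul, Matrix.one_mulVec]
  have hu2 : M *ᵥ u2 = pv := by
    rw [hu2def, Matrix.mulVec_mulVec, hMul, Matrix.one_mulVec]
  have hu1e : ∀ i, u1 i = M⁻¹ i (Fin.last g) := by
    intro i
    rw [hu1def]
    simp [Matrix.mulVec, dotProduct, hδ, Pi.single_apply]
  have hα : u1 (Fin.last g) = Rgg := by
    rw [hRgg]
    simp [hδ, dotProduct, Pi.single_apply]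
  have hβ : u2 (Fin.last g) = R0g := by
    rw [hR0g]
    calc u2 (Fin.last g) = ∑ j, M⁻¹ (Fin.last g) j * pv j := rfl
      _ = ∑ j, pv j * u1 j := Finset.sum_congr rfl fun j _ => by
            rw [hu1e j, hsym j (Fin.last g), mul_comm]
      _ = pv ⬝ᵥ u1 := rfl
  have hF10 : Fsum g p u1 0 = R0g := by
    rw [Fsum_zero, hR0g]; rfl
  have hF20 : Fsum g p u2 0 = R00 := by
    rw [Fsum_zero, hR00]; rfl
  set U1 : ℕ → ℝ := fun k => if hk : k < g + 1 then u1 ⟨k, hk⟩ else 0 with hU1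
  set U2 : ℕ → ℝ := fun k => if hk : k < g + 1 then u2 ⟨k, hk⟩ else 0 with hU2
  have hzc : ∀ i, i < g → c (i+1) - z ≠ 0 := fun i hi =>
    sub_ne_zero.mpr (Ne.symm (hz (i+1) (by omega) (by omega)))
  -- row equations for u1
  have heq1 : ∀ i, i < g → q i * Fsum g p u1 i + p i * Hsum g q u1 i
      + (c (i+1) - z) * U1 i = 0 := by
    intro i hi
    have hi' : i < g + 1 := by omega
    have h := row_eq g c p q z u1 ⟨i, hi'⟩
    rw [← hM, hu1, hδ] at h
    have hne : (⟨i, hi'⟩ : Fin (g+1)) ≠ Fin.last g := by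
      intro hcon
      have : i = g := by simpa [Fin.last] using congrArg Fin.val hcon
      omega
    rw [Pi.single_apply, if_neg hne] at h
    simp only [hi, if_true] at h
    have hU : U1 i = u1 ⟨i, hi'⟩ := by rw [hU1]; exact dif_pos hi'
    rw [hU]
    linarith [h]
  have heq2 : ∀ i, i < g → q i * Fsum g p u2 i + p i * (Hsum g q u2 i - 1)
      + (c (i+1) - z) * U2 i = 0 := by
    intro i hi
    have hi' : i < g + 1 := by omega
    have h := row_eq g c p q z u2 ⟨i, hi'⟩
    rw [← hM, hu2, hpv] at h
    simp only [hi, if_true] at h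
    have hU : U2 i = u2 ⟨i, hi'⟩ := by rw [hU2]; exact dif_pos hi'
    rw [hU]
    linarith [h]
  have hFr1 : ∀ i, i < g → Fsum g p u1 i = Fsum g p u1 (i+1) + p i * U1 i := by
    intro i hi
    have hi' : i < g + 1 := by omega
    have hU : U1 i = u1 ⟨i, hi'⟩ := by rw [hU1]; exact dif_pos hi'
    rw [hU]; exact Fsum_rec g p u1 i hi'
  have hFr2 : ∀ i, i < g → Fsum g p u2 i = Fsum g p u2 (i+1) + p i * U2 i := by
    intro i hi
    have hi' : i < g + 1 := by omega
    have hU : U2 i = u2 ⟨i, hi'⟩ := by rw [hU2]; exact dif_pos hi'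
    rw [hU]; exact Fsum_rec g p u2 i hi'
  have hHr1 : ∀ i, i < g → Hsum g q u1 (i+1) = Hsum g q u1 i + q i * U1 i := by
    intro i hi
    have hi' : i < g + 1 := by omega
    have hU : U1 i = u1 ⟨i, hi'⟩ := by rw [hU1]; exact dif_pos hi'
    rw [hU]; exact Hsum_rec g q u1 i hi'
  have hHr2 : ∀ i, i < g → (Hsum g q u2 (i+1) - 1) = (Hsum g q u2 i - 1) + q i * U2 i := by
    intro i hi
    have hi' : i < g + 1 := by omega
    have hU : U2 i = u2 ⟨i, hi'⟩ := by rw [hU2]; exact dif_pos hi'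
    rw [hU, Hsum_rec g q u2 i hi']; ring
  set P : Matrix (Fin 2) (Fin 2) ℝ := prodBP (fun j => bpa z (c (j+1)) (p j) (q j)) 0 g with hP
  have hv1 := prod_vec g c p q z (Fsum g p u1) (Hsum g q u1) U1 hzc hFr1 hHr1 heq1 g le_rfl
  have hv2 := prod_vec g c p q z (Fsum g p u2) (fun k => Hsum g q u2 k - 1) U2 hzc hFr2 hHr2
    heq2 g le_rfl
  rw [← hP] at hv1 hv2
  rw [Fsum_last, hα, hF10, Hsum_zero] at hv1
  replace hv2 : P *ᵥ ![Fsum g p u2 g, -(Hsum g q u2 g - 1)]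
      = ![Fsum g p u2 0, -(Hsum g q u2 0 - 1)] := hv2
  rw [Fsum_last, hβ, hF20, Hsum_zero] at hv2
  -- last row equations
  have hrow1 := row_eq g c p q z u1 (Fin.last g)
  rw [← hM, hu1, hδ, Pi.single_apply, if_pos rfl] at hrow1
  simp only [Fin.val_last, lt_irrefl, if_false] at hrow1
  rw [Fsum_last, hα] at hrow1
  have hrow2 := row_eq g c p q z u2 (Fin.last g)
  rw [← hM, hu2, hpv] at hrow2
  simp only [Fin.val_last, lt_irrefl, if_false] at hrow2
  rw [Fsum_last, hβ] at hrow2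
  set h1 : ℝ := Hsum g q u1 g with hh1
  set h2 : ℝ := Hsum g q u2 g with hh2
  -- scalar equations
  have e1 := congrFun hv1 0
  have e2 := congrFun hv1 1
  have e3 := congrFun hv2 0
  have e4 := congrFun hv2 1
  simp only [Matrix.mulVec, dotProduct, Fin.sum_univ_two, Matrix.cons_val_zero,
    Matrix.cons_val_one, Matrix.head_cons, neg_zero, neg_neg] at e1 e2 e3 e4
  -- final computation
  rw [transferM, ← hP]
  ext i j
  fin_cases i <;> fin_cases j <;>
    simp only [Matrix.smul_apply, Matrix.mul_apply, Fin.sum_univ_two, bpinf,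
      Matrix.cons_val_zero, Matrix.cons_val_one, Matrix.head_cons, Matrix.head_fin_const,
      Matrix.cons_val', Matrix.empty_val', Matrix.cons_val_fin_one, smul_eq_mul,
      Fin.isValue, Matrix.of_apply, Fin.zero_eta, Fin.mk_one]
  · -- (0,0)
    have hP01 : P 0 1 * R0g = p g * (R00 * Rgg - R0g ^ 2) := by
      linear_combination (-(R0g * p g)) * e1 + (R0g * P 0 1) * hrow1
        + (Rgg * p g) * e3 + (-(Rgg * P 0 1)) * hrow2
    field_simp
    linear_combination -hP01
  · -- (0,1)
    have hE3 : P 0 0 * (p g)^2 * R0g = P 0 1 * (z - p g * q g) * R0g + p g * R00 := by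
      linear_combination (p g) * e3 + (-(P 0 1)) * hrow2
    field_simp
    linear_combination hE3
  · -- (1,0)
    have hP11 : P 1 1 * R0g = p g * Rgg := by
      linear_combination (-(R0g * p g)) * e2 + (R0g * P 1 1) * hrow1
        + (Rgg * p g) * e4 + (-(Rgg * P 1 1)) * hrow2
    field_simp
    linear_combination -hP11
  · -- (1,1)
    have hE4 : P 1 0 * (p g)^2 * R0g = P 1 1 * (z - p g * q g) * R0g + p g := by
      linear_combination (p g) * e4 + (-(P 1 1)) * hrow2
    field_simp
    linear_combination hE4
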